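/- arXiv:1212.6162 — 6 statements merged into one kernel-verified Lean document; each statement's English description precedes it below -/
import Mathlib

section
/- For every integer i ≥ 3, the entries of the second upper diagonal of the matrix of moments of the Legendre polynomials are F_{i-2, i} = 2^{i-1} ((i − 1)!)² / (2i − 2)!. -/
open Polynomial

/-- The n-th Legendre polynomial, defined via the Rodrigues formula
P_n(eta) = (1/(2^n n!)) d^n/d eta^n (eta^2 - 1)^n. -/
noncomputable def legendre (n : ℕ) : Polynomial ℝ :=
  ((1 : ℝ) / (2 ^ n * n.factorial)) • (Polynomial.derivative^[n] ((X ^ 2 - 1) ^ n))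

/-- The matrix of moments of the Legendre polynomials:
F i j = ∫_{-1}^{1} P_{i-1}(eta) eta^{j-1} d eta (intended for i, j ≥ 1). -/
noncomputable def Fmat (i j : ℕ) : ℝ :=
  ∫ η in (-1 : ℝ)..1, (legendre (i - 1)).eval η * η ^ (j - 1)

/-!
Write `I n = ∫_{-1}^{1} (1 - x²)^n dx`. By Rodrigues' formula and `n` integrations by parts, whose
boundary terms vanish because `(x² - 1)^n` has zeros of order `n` at `±1`,
`∫ P_n(x) x^(n+2) dx = (n+2)!/2 / (2^n n!) · ∫ (1 - x²)^n x² dx`.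
One more integration by parts, against `d/dx (1 - x²)^(n+1)`, gives
`∫ (1 - x²)^n x² dx = I (n+1) / (2n+2)`, so `I (n+1) = I n - I (n+1) / (2n+2)`,
and this recursion yields `I n = 2^(2n+1) (n!)² / (2n+1)!`.
-/

open intervalIntegral

theorem Polynomial.integral_eval_derivative_mul (p q : ℝ[X]) (a b : ℝ) :
    ∫ x in a..b, (derivative p).eval x * q.eval x =
      p.eval b * q.eval b - p.eval a * q.eval a -
        ∫ x in a..b, p.eval x * (derivative q).eval x := by
  have := integral_mul_deriv_eq_deriv_mul (a := a) (b := b) (fun x _ ↦ p.hasDerivAt x)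
    (fun x _ ↦ q.hasDerivAt x) (p.derivative.continuous.intervalIntegrable _ _)
    (q.derivative.continuous.intervalIntegrable _ _)
  linarith

theorem integral_eval_derivative_mul_pow_succ {p : ℝ[X]} (h₁ : p.eval 1 = 0) (h₂ : p.eval (-1) = 0)
    (m : ℕ) :
    ∫ x in (-1 : ℝ)..1, (derivative p).eval x * x ^ (m + 1) =
      -(m + 1) * ∫ x in (-1 : ℝ)..1, p.eval x * x ^ m := by
  have hibp := p.integral_eval_derivative_mul (X ^ (m + 1)) (-1) 1
  simp only [eval_pow, eval_X, h₁, h₂, derivative_X_pow, eval_mul, eval_C, Nat.add_sub_cancel,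
    zero_mul, sub_self, zero_sub] at hibp
  rw [hibp, ← integral_const_mul, ← integral_neg]
  congr 1 with x
  push_cast
  ring

theorem eval_iterate_derivative_X_sq_sub_one_pow {n k : ℕ} (hk : k < n) {x : ℝ} (hx : x ^ 2 = 1) :
    (derivative^[k] ((X ^ 2 - 1 : ℝ[X]) ^ n)).eval x = 0 := by
  obtain ⟨r, hr⟩ := pow_sub_dvd_iterate_derivative_pow (X ^ 2 - 1 : ℝ[X]) n k
  rw [hr, eval_mul, eval_pow]
  simp [hx, Nat.sub_ne_zero_of_lt hk]

theorem integral_eval_iterate_derivative_mul_pow {p : ℝ[X]} {k : ℕ}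
    (hp : ∀ j < k, (derivative^[j] p).eval 1 = 0 ∧ (derivative^[j] p).eval (-1) = 0) (m : ℕ) :
    ∫ x in (-1 : ℝ)..1, (derivative^[k] p).eval x * x ^ (m + k) =
      (-1) ^ k * (m + k).descFactorial k * ∫ x in (-1 : ℝ)..1, p.eval x * x ^ m := by
  induction k with
  | zero => simp
  | succ k ih =>
    obtain ⟨h₁, h₂⟩ := hp k k.lt_succ_self
    rw [Function.iterate_succ_apply', ← add_assoc,
      integral_eval_derivative_mul_pow_succ h₁ h₂, ih fun j hj ↦ hp j (hj.trans k.lt_succ_self),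
      Nat.succ_descFactorial_succ]
    push_cast
    ring

theorem integral_legendre_mul_pow (n m : ℕ) :
    ∫ x in (-1 : ℝ)..1, (legendre n).eval x * x ^ (m + n) =
      (m + n).descFactorial n / (2 ^ n * n.factorial) *
        ∫ x in (-1 : ℝ)..1, (1 - x ^ 2) ^ n * x ^ m := by
  have hvanish (j : ℕ) (hj : j < n) :
      (derivative^[j] ((X ^ 2 - 1 : ℝ[X]) ^ n)).eval 1 = 0 ∧
        (derivative^[j] ((X ^ 2 - 1 : ℝ[X]) ^ n)).eval (-1) = 0 :=
    ⟨eval_iterate_derivative_X_sq_sub_one_pow hj (by norm_num),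
      eval_iterate_derivative_X_sq_sub_one_pow hj (by norm_num)⟩
  simp only [legendre, eval_smul, smul_eq_mul, mul_assoc, integral_const_mul,
    integral_eval_iterate_derivative_mul_pow hvanish]
  have hsign : (-1) ^ n * ∫ x in (-1 : ℝ)..1, ((X ^ 2 - 1 : ℝ[X]) ^ n).eval x * x ^ m =
      ∫ x in (-1 : ℝ)..1, (1 - x ^ 2) ^ n * x ^ m := by
    rw [← integral_const_mul]
    congr 1 with x
    simp only [eval_pow, eval_sub, eval_X, eval_one, ← mul_assoc, ← mul_pow]
    ring
  rw [← hsign]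
  ring

theorem integral_one_sub_sq_pow_mul_sq (n : ℕ) :
    ∫ x in (-1 : ℝ)..1, (1 - x ^ 2) ^ n * x ^ 2 =
      (∫ x in (-1 : ℝ)..1, (1 - x ^ 2) ^ (n + 1)) / (2 * (n + 1 : ℝ)) := by
  have hibp := integral_eval_derivative_mul ((1 - X ^ 2 : ℝ[X]) ^ (n + 1)) X (-1) 1
  simp only [derivative_pow, derivative_sub, derivative_one, derivative_X,
    eval_mul, eval_pow, eval_sub, eval_one, eval_X, eval_C] at hibp
  norm_num at hibp
  rw [← hibp, eq_div_iff (by positivity), ← integral_mul_const]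
  congr 1 with x
  ring

theorem integral_one_sub_sq_pow (n : ℕ) :
    ∫ x in (-1 : ℝ)..1, (1 - x ^ 2) ^ n =
      2 ^ (2 * n + 1) * (n.factorial : ℝ) ^ 2 / (2 * n + 1).factorial := by
  induction n with
  | zero => norm_num
  | succ n ih =>
    have hsplit : ∫ x in (-1 : ℝ)..1, (1 - x ^ 2) ^ (n + 1) =
        (∫ x in (-1 : ℝ)..1, (1 - x ^ 2) ^ n) - ∫ x in (-1 : ℝ)..1, (1 - x ^ 2) ^ n * x ^ 2 := by
      rw [← integral_sub (Continuous.intervalIntegrable (by fun_prop) _ _)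
        (Continuous.intervalIntegrable (by fun_prop) _ _)]
      congr 1 with x
      ring
    rw [integral_one_sub_sq_pow_mul_sq, ih] at hsplit
    rw [show 2 * (n + 1) + 1 = 2 * n + 1 + 1 + 1 by ring, Nat.factorial_succ (2 * n + 1 + 1),
      Nat.factorial_succ (2 * n + 1), Nat.factorial_succ n]
    push_cast at hsplit ⊢
    field_simp at hsplit ⊢
    linear_combination (2 * (n : ℝ) + 2) * hsplit

/-- The second upper diagonal: F_{i-2,i} = 2^{i-1} ((i-1)!)^2 / (2i-2)! for i ≥ 3. -/
theorem stmt_8 (i : ℕ) (hi : 3 ≤ i) :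
    Fmat (i - 2) i = 2 ^ (i - 1) * ((i - 1).factorial : ℝ) ^ 2 /
      ((2 * i - 2).factorial : ℝ) := by
  obtain ⟨n, rfl⟩ : ∃ n, i = n + 3 := ⟨i - 3, by omega⟩
  have hdesc : ((n + 2).descFactorial n : ℝ) = (n + 2).factorial / 2 := by
    have := Nat.factorial_mul_descFactorial (Nat.le_add_right n 2)
    rw [Nat.add_sub_cancel_left, Nat.factorial_two] at this
    rw [eq_div_iff two_ne_zero, mul_comm]
    exact_mod_cast this
  simp only [Fmat, show n + 3 - 2 - 1 = n by omega, show n + 3 - 1 = 2 + n by omega,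
    show 2 * (n + 3) - 2 = 2 * n + 1 + 1 + 1 + 1 by omega]
  rw [integral_legendre_mul_pow, integral_one_sub_sq_pow_mul_sq, integral_one_sub_sq_pow,
    add_comm 2 n, hdesc, show 2 * (n + 1) + 1 = 2 * n + 1 + 1 + 1 by ring]
  simp only [Nat.factorial_succ]
  push_cast
  field_simp
  ring
end

section
/- For every integer n ≥ 0, the n-th Legendre polynomial has the explicit monomial expansion P_n(η) = Σ_{k} (−1)^{(n-k)/2} (n + k)! / ( 2^n · k! · ((n − k)/2)! · ((n + k)/2)! ) · η^k, where the sum runs over integers k with 0 ≤ k ≤ n and k ≡ n (mod 2). -/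
/-!
Expand `(X² - 1)ⁿ = ∑ⱼ (-1)ⁿ⁻ʲ C(n, j) X²ʲ` and differentiate termwise: `X²ʲ`
becomes `(2j)ₙ X²ʲ⁻ⁿ`, with the falling factorial `(2j)ₙ = (2j)! / (2j - n)!`, which
vanishes when `2j < n`. The surviving terms are indexed by `k = 2j - n`, which runs
over `0 ≤ k ≤ n` with `k ≡ n (mod 2)`, and `C(n, j) (2j)ₙ / n! = (n + k)! / (k! j! (n - j)!)`
where `j = (n + k) / 2` and `n - j = (n - k) / 2`.
-/

open Polynomial

open Finset
open scoped Nat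

theorem iterate_derivative_X_sq_sub_one_pow {R : Type*} [CommRing R] (n : ℕ) :
    derivative^[n] ((X ^ 2 - 1 : R[X]) ^ n) =
      ∑ j ∈ range (n + 1),
        C ((-1) ^ (j + n) * n.choose j * (2 * j).descFactorial n : R) * X ^ (2 * j - n) := by
  rw [sub_pow, iterate_derivative_sum]
  refine sum_congr rfl fun j _ => ?_
  have hterm : (-1) ^ (j + n) * (X ^ 2) ^ j * 1 ^ (n - j) * (n.choose j : R[X]) =
      C ((-1) ^ (j + n) * n.choose j : R) * X ^ (2 * j) := by
    simp only [map_mul, map_pow, map_neg, map_one, map_natCast, one_pow, ← pow_mul]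
    ring
  rw [hterm, iterate_derivative_C_mul, iterate_derivative_X_pow_eq_C_mul, ← mul_assoc, ← C_mul]

theorem sum_range_succ_eq_sum_filter_parity {M : Type*} [AddCommMonoid M] (n : ℕ) (f : ℕ → M)
    (hf : ∀ j, 2 * j < n → f j = 0) :
    ∑ j ∈ range (n + 1), f j =
      ∑ k ∈ (range (n + 1)).filter (fun k => k % 2 = n % 2), f ((n + k) / 2) := by
  rw [← sum_filter_of_ne (p := fun j => n ≤ 2 * j)
    fun j _ hj => by_contra fun h => hj (hf j (by omega))]
  refine sum_nbij' (fun j => 2 * j - n) (fun k => (n + k) / 2) ?_ ?_ ?_ ?_ ?_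
  all_goals intro a ha; simp only [mem_filter, mem_range] at ha ⊢
  · omega
  · omega
  · omega
  · omega
  · exact congrArg f (by omega)

theorem choose_mul_descFactorial_div_factorial {K : Type*} [Field K] [CharZero K] {n j : ℕ}
    (hjn : j ≤ n) (hnj : n ≤ 2 * j) :
    (n.choose j * (2 * j).descFactorial n : K) / n ! =
      (2 * j)! / ((2 * j - n)! * j ! * (n - j)!) := by
  have key : n.choose j * (2 * j).descFactorial n * ((2 * j - n)! * j ! * (n - j)!) =
      (2 * j)! * n ! := by
    rw [← Nat.factorial_mul_descFactorial hnj, ← Nat.choose_mul_factorial_mul_factorial hjn]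
    ring
  rw [div_eq_div_iff (by norm_cast; positivity) (by norm_cast; positivity)]
  exact_mod_cast key

/-- Explicit monomial expansion of the Legendre polynomial:
P_n(eta) = Σ_{0 ≤ k ≤ n, k ≡ n (mod 2)}
  (-1)^{(n-k)/2} (n+k)! / (2^n k! ((n-k)/2)! ((n+k)/2)!) eta^k. -/
theorem stmt_9 (n : ℕ) (η : ℝ) :
    (legendre n).eval η =
      ∑ k ∈ (Finset.range (n + 1)).filter (fun k => k % 2 = n % 2),
        (-1 : ℝ) ^ ((n - k) / 2) * ((n + k).factorial : ℝ) /
          ((2 : ℝ) ^ n * (k.factorial : ℝ) * (((n - k) / 2).factorial : ℝ) *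
            (((n + k) / 2).factorial : ℝ)) * η ^ k := by
  rw [legendre, eval_smul, iterate_derivative_X_sq_sub_one_pow, eval_finsetSum, smul_eq_mul,
    mul_sum, sum_range_succ_eq_sum_filter_parity]
  · refine sum_congr rfl fun k hk => ?_
    obtain ⟨hkn, hpar⟩ : k ≤ n ∧ k % 2 = n % 2 := by simpa [Nat.lt_succ_iff] using hk
    set j := (n + k) / 2
    have hj2 : 2 * j = n + k := by omega
    have hsign : (-1 : ℝ) ^ (j + n) = (-1) ^ (n - j) := by
      rw [show j + n = (n - j) + 2 * j by omega, pow_add, pow_mul]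
      simp
    have hcoef :=
      choose_mul_descFactorial_div_factorial (K := ℝ) (n := n) (j := j) (by omega) (by omega)
    rw [eval_mul, eval_C, eval_pow, eval_X, hsign]
    rw [show 2 * j - n = k by omega, show n - j = (n - k) / 2 by omega, hj2] at hcoef ⊢
    calc _ = (-1) ^ ((n - k) / 2) * ((n.choose j * (n + k).descFactorial n : ℝ) / n !) /
          2 ^ n * η ^ k := by ring
      _ = _ := by rw [hcoef]; ring
  · intro j hj
    simp [Nat.descFactorial_eq_zero_iff_lt.2 hj]
end

section
/- For every integer k ≥ 0 and every ξ ∈ ℝ with 0 < |ξ| < 1, ∫_{-1}^{1} η^k (ξ² + 1 − 2ξη)^{-1/2} dη = Σ_{n=0}^{k} F_{n+1, k+1} ξⁿ; in particular this integral is a polynomial of degree at most k in ξ. -/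
open Polynomial

/-!
Substituting `η = ξ (1 - t²) / 2 + t` turns `√(ξ² + 1 - 2ξη)` into `1 - ξt`, which is exactly
`dη/dt`; so the integral becomes `∫_{-1}^{1} (ξ (1 - t²) / 2 + t)^k dt`, a polynomial in `ξ` whose
binomial coefficients are `C(k, n) 2⁻ⁿ ∫_{-1}^{1} (1 - t²)ⁿ t^(k-n) dt`. Integrating the Rodrigues
formula by parts `n` times (the boundary terms vanish because `±1` are roots of order `n` of
`(X² - 1)ⁿ`) shows that these are precisely the Legendre moments `F_{n+1,k+1}`.
-/

theorem eval_iterate_derivative_pow_eq_zero {R : Type*} [CommSemiring R] {p : R[X]} {x : R}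
    (hx : p.IsRoot x) {n i : ℕ} (hi : i < n) : (derivative^[i] (p ^ n)).eval x = 0 := by
  obtain ⟨r, hr⟩ := pow_sub_dvd_iterate_derivative_pow p n i
  rw [hr, eval_mul, eval_pow, hx.eq_zero, zero_pow (by omega), zero_mul]

theorem integral_eval_mul_eval_derivative (a b : ℝ) (p q : ℝ[X]) :
    ∫ x in a..b, p.eval x * (derivative q).eval x =
      p.eval b * q.eval b - p.eval a * q.eval a -
        ∫ x in a..b, (derivative p).eval x * q.eval x :=
  intervalIntegral.integral_mul_deriv_eq_deriv_mul (fun x _ => p.hasDerivAt x)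
    (fun x _ => q.hasDerivAt x) ((derivative p).continuous.intervalIntegrable _ _)
    ((derivative q).continuous.intervalIntegrable _ _)

theorem integral_eval_mul_eval_iterate_derivative {a b : ℝ} (p q : ℝ[X]) (n : ℕ)
    (ha : ∀ i < n, (derivative^[i] q).eval a = 0) (hb : ∀ i < n, (derivative^[i] q).eval b = 0) :
    ∫ x in a..b, p.eval x * (derivative^[n] q).eval x =
      (-1) ^ n * ∫ x in a..b, (derivative^[n] p).eval x * q.eval x := by
  induction n generalizing q with
  | zero => simp
  | succ n ih =>
    have hqa : q.eval a = 0 := ha 0 n.succ_pos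
    have hqb : q.eval b = 0 := hb 0 n.succ_pos
    rw [Function.iterate_succ_apply, ih (derivative q) (fun i hi => ha (i + 1) (by omega))
      (fun i hi => hb (i + 1) (by omega)), integral_eval_mul_eval_derivative, hqa, hqb,
      Function.iterate_succ_apply']
    ring

theorem integral_eval_iterate_derivative_rodrigues_mul_pow (n k : ℕ) :
    ∫ x in (-1 : ℝ)..1, (derivative^[n] ((X ^ 2 - 1) ^ n : ℝ[X])).eval x * x ^ k =
      n.factorial * k.choose n * ∫ x in (-1 : ℝ)..1, (1 - x ^ 2) ^ n * x ^ (k - n) := by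
  have hroot : ∀ x : ℝ, x ^ 2 = 1 → (X ^ 2 - 1 : ℝ[X]).IsRoot x := fun x hx => by simp [hx]
  have h := integral_eval_mul_eval_iterate_derivative (X ^ k) ((X ^ 2 - 1) ^ n) n
    (fun i hi => eval_iterate_derivative_pow_eq_zero (hroot (-1) (by norm_num)) hi)
    (fun i hi => eval_iterate_derivative_pow_eq_zero (hroot 1 (by norm_num)) hi)
  simp only [iterate_derivative_X_pow_eq_natCast_mul, eval_mul, eval_natCast,
    eval_pow, eval_sub, eval_X, eval_one] at h
  rw [intervalIntegral.integral_congr fun x _ => mul_comm _ (x ^ k), h,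
    Nat.descFactorial_eq_factorial_mul_choose, ← intervalIntegral.integral_const_mul,
    ← intervalIntegral.integral_const_mul]
  refine intervalIntegral.integral_congr fun x _ => ?_
  simp only [Nat.cast_mul]
  have hsign : ((-1 : ℝ) ^ n) ^ 2 = 1 := by rw [← pow_mul, mul_comm, pow_mul]; norm_num
  rw [show x ^ 2 - 1 = -1 * (1 - x ^ 2) by ring, mul_pow]
  linear_combination (n.factorial * k.choose n * x ^ (k - n) * (1 - x ^ 2) ^ n : ℝ) * hsign

theorem Fmat_succ_succ (n k : ℕ) :
    Fmat (n + 1) (k + 1) =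
      k.choose n / 2 ^ n * ∫ t in (-1 : ℝ)..1, (1 - t ^ 2) ^ n * t ^ (k - n) := by
  simp only [Fmat, legendre, Nat.add_sub_cancel, eval_smul, smul_eq_mul, mul_assoc,
    intervalIntegral.integral_const_mul, integral_eval_iterate_derivative_rodrigues_mul_pow]
  field_simp

theorem one_sub_mul_pos {ξ t : ℝ} (hξ : |ξ| < 1) (ht : t ∈ Set.uIcc (-1 : ℝ) 1) :
    0 < 1 - ξ * t := by
  rw [Set.uIcc_of_le (by norm_num), Set.mem_Icc, ← abs_le] at ht
  have : |ξ * t| < 1 := abs_mul ξ t ▸ mul_lt_one_of_nonneg_of_lt_one_left (abs_nonneg ξ) hξ ht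
  linarith [le_abs_self (ξ * t)]

theorem integral_mul_inv_sqrt_eq {ξ : ℝ} (hξ : |ξ| < 1) {f : ℝ → ℝ} (hf : Continuous f) :
    ∫ η in (-1 : ℝ)..1, f η * (√(ξ ^ 2 + 1 - 2 * ξ * η))⁻¹ =
      ∫ t in (-1 : ℝ)..1, f (ξ / 2 * (1 - t ^ 2) + t) := by
  set φ : ℝ → ℝ := fun t => ξ / 2 * (1 - t ^ 2) + t
  have hsq : ∀ t, ξ ^ 2 + 1 - 2 * ξ * φ t = (1 - ξ * t) ^ 2 := fun t => by ring
  have hφ : ∀ t ∈ Set.uIcc (-1 : ℝ) 1, HasDerivAt φ (1 - ξ * t) t := fun t _ => by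
    have h : HasDerivAt φ (ξ / 2 * -(2 * t ^ (2 - 1)) + 1) t := by
      exact_mod_cast (((hasDerivAt_pow 2 t).const_sub 1).const_mul (ξ / 2)).add (hasDerivAt_id t)
    convert h using 1
    ring
  have hcont : ContinuousOn (fun η => f η * (√(ξ ^ 2 + 1 - 2 * ξ * η))⁻¹)
      (φ '' Set.uIcc (-1 : ℝ) 1) := by
    rintro _ ⟨t, ht, rfl⟩
    have hpos : 0 < √(ξ ^ 2 + 1 - 2 * ξ * φ t) := by
      rw [hsq, Real.sqrt_sq (one_sub_mul_pos hξ ht).le]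
      exact one_sub_mul_pos hξ ht
    exact (hf.continuousAt.mul ((by fun_prop : Continuous fun η =>
      √(ξ ^ 2 + 1 - 2 * ξ * η)).continuousAt.inv₀ hpos.ne')).continuousWithinAt
  have h := intervalIntegral.integral_comp_mul_deriv' hφ (by fun_prop) hcont
  rw [show φ (-1) = -1 by norm_num [φ], show φ 1 = 1 by norm_num [φ]] at h
  rw [← h]
  refine intervalIntegral.integral_congr fun t ht => ?_
  have hpos := one_sub_mul_pos hξ ht
  change f (φ t) * (√(ξ ^ 2 + 1 - 2 * ξ * φ t))⁻¹ * (1 - ξ * t) = f (φ t)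
  rw [hsq, Real.sqrt_sq hpos.le, inv_mul_cancel_right₀ hpos.ne']

theorem stmt_13_general (k : ℕ) (ξ : ℝ) (hξ1 : |ξ| < 1) :
    (∫ η in (-1 : ℝ)..1, η ^ k * (Real.sqrt (ξ ^ 2 + 1 - 2 * ξ * η))⁻¹) =
      ∑ n ∈ Finset.range (k + 1), Fmat (n + 1) (k + 1) * ξ ^ n := by
  simp only [integral_mul_inv_sqrt_eq hξ1 (continuous_pow k), add_pow]
  rw [intervalIntegral.integral_finsetSum fun n _ =>
    Continuous.intervalIntegrable (by fun_prop) _ _]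
  refine Finset.sum_congr rfl fun n _ => ?_
  rw [Fmat_succ_succ, mul_right_comm, ← intervalIntegral.integral_const_mul]
  refine intervalIntegral.integral_congr fun t _ => ?_
  simp only [mul_pow, div_pow]
  ring

/-- For 0 < |xi| < 1, the integral ∫_{-1}^1 eta^k (xi^2 + 1 - 2 xi eta)^(-1/2) d eta
is the polynomial Σ_{n=0}^{k} F_{n+1,k+1} xi^n of degree at most k in xi. -/
theorem stmt_13 (k : ℕ) (ξ : ℝ) (hξ0 : 0 < |ξ|) (hξ1 : |ξ| < 1) :
    (∫ η in (-1 : ℝ)..1, η ^ k * (Real.sqrt (ξ ^ 2 + 1 - 2 * ξ * η))⁻¹) =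
      ∑ n ∈ Finset.range (k + 1), Fmat (n + 1) (k + 1) * ξ ^ n :=
  stmt_13_general k ξ hξ1
end

section
/- (Theorem 1: full charge and dipole moment of a conducting ball.) Under the stated hypotheses, ∫_{-r}^{r} ( Σ_{j=1}^{n+1} c_j z^{j-1} ) dz = r b_1 and ∫_{-r}^{r} z ( Σ_{j=1}^{n+1} c_j z^{j-1} ) dz = r³ b_2. Physically: the full charge Q = 2πr ∫_{-r}^{r} σ(z) dz equals 4πε₀ r b_1 and is determined by the value b_1 of the external potential at the center of the ball, and the dipole moment D = 2πr ∫_{-r}^{r} z σ(z) dz equals 4πε₀ r³ b_2 and is determined by the value b_2 of the external field intensity at the center of the ball. -/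
/-!
Rescaling `z = r η` turns the moment `∫_{-r}^{r} z^m σ(z) dz` of the charge density
`σ(z) = Σ_j c_j z^{j-1}` into `r^{m+1}` times the moments `∫_{-1}^{1} η^m η^{j-1} dη`
weighted by `r^{j-1} c_j`. Since `P₀ = 1` and `P₁ = η`, these weighted moments for `m = 0, 1`
are exactly the left-hand sides of rows `1` and `2` of the linear system, which equal `b₁` and
`r b₂`. When `n = 0` there is no second row; then `b₂ = 0` and the constant density has no
dipole moment.
-/

open Polynomial

lemma legendre_zero : legendre 0 = 1 := by simp [legendre]

lemma legendre_one : legendre 1 = X := by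
  ext k
  simp [legendre, one_add_one_eq_two, smul_eq_C_mul, coeff_C_mul]

lemma Fmat_eq_integral_pow_mul_pow {i : ℕ} (h : legendre (i - 1) = X ^ (i - 1)) (j : ℕ) :
    Fmat i j = ∫ η in (-1 : ℝ)..1, η ^ (i - 1) * η ^ (j - 1) := by
  simp only [Fmat, h, eval_pow, eval_X]

lemma intervalIntegral.integral_neg_symm_eq_mul_integral_comp_mul (f : ℝ → ℝ) (r : ℝ) :
    ∫ z in -r..r, f z = r * ∫ η in (-1 : ℝ)..1, f (r * η) := by
  simp

lemma integral_pow_mul_sum_pow_eq (r : ℝ) (m : ℕ) (s : Finset ℕ) (c : ℕ → ℝ) :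
    ∫ z in -r..r, z ^ m * ∑ j ∈ s, c j * z ^ (j - 1) =
      r ^ (m + 1) *
        ∑ j ∈ s, (∫ η in (-1 : ℝ)..1, η ^ m * η ^ (j - 1)) * r ^ (j - 1) * c j := by
  have hexpand : ∀ η : ℝ, (r * η) ^ m * ∑ j ∈ s, c j * (r * η) ^ (j - 1) =
      ∑ j ∈ s, (r ^ m * r ^ (j - 1) * c j) * (η ^ m * η ^ (j - 1)) := fun η => by
    rw [Finset.mul_sum]
    exact Finset.sum_congr rfl fun j _ => by ring
  rw [intervalIntegral.integral_neg_symm_eq_mul_integral_comp_mul]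
  simp_rw [hexpand]
  rw [intervalIntegral.integral_finsetSum fun j _ =>
    (by fun_prop : Continuous _).intervalIntegrable _ _]
  simp_rw [intervalIntegral.integral_const_mul, Finset.mul_sum]
  exact Finset.sum_congr rfl fun j _ => by ring

lemma integral_pow_mul_sum_pow_eq_of_row {r β : ℝ} {i : ℕ} {s : Finset ℕ} {c : ℕ → ℝ}
    (hi : 1 ≤ i) (hP : legendre (i - 1) = X ^ (i - 1))
    (hrow : ∑ j ∈ s, Fmat i j * r ^ (j - 1) * c j = β) :
    ∫ z in -r..r, z ^ (i - 1) * ∑ j ∈ s, c j * z ^ (j - 1) = r ^ i * β := by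
  rw [integral_pow_mul_sum_pow_eq, Nat.sub_add_cancel hi, ← hrow]
  simp_rw [Fmat_eq_integral_pow_mul_pow hP]

theorem stmt_14_general (r : ℝ) (n : ℕ) (b c : ℕ → ℝ)
    (hb0 : ∀ i, n + 1 < i → b i = 0)
    (hsys : ∀ i, 1 ≤ i → i ≤ n + 1 →
      (∑ j ∈ Finset.Icc 1 (n + 1), Fmat i j * r ^ (j - 1) * c j) = r ^ (i - 1) * b i) :
    (∫ z in (-r)..r, ∑ j ∈ Finset.Icc 1 (n + 1), c j * z ^ (j - 1)) = r * b 1 ∧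
    (∫ z in (-r)..r, z * ∑ j ∈ Finset.Icc 1 (n + 1), c j * z ^ (j - 1)) = r ^ 3 * b 2 := by
  have hP₀ : legendre (1 - 1) = X ^ (1 - 1) := by simpa using legendre_zero
  have hP₁ : legendre (2 - 1) = X ^ (2 - 1) := by simpa using legendre_one
  constructor
  · have hcharge := integral_pow_mul_sum_pow_eq_of_row le_rfl hP₀ (hsys 1 le_rfl (by omega))
    simpa using hcharge
  · rcases Nat.eq_zero_or_pos n with rfl | hn
    · simp [hb0 2 (by omega)]
    · have hdipole :=
        integral_pow_mul_sum_pow_eq_of_row (by omega) hP₁ (hsys 2 (by omega) (by omega))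
      simpa [pow_succ, mul_assoc] using hdipole

/-- Theorem 1 (full charge and dipole moment of a conducting ball).
If the coefficients c solve the system Σ_j F_{ij} r^{j-1} c_j = r^{i-1} b_i,
i = 1, ..., n+1 (with b_i = 0 for i > n+1), then
∫_{-r}^{r} Σ_j c_j z^{j-1} dz = r b_1 and ∫_{-r}^{r} z Σ_j c_j z^{j-1} dz = r^3 b_2,
i.e. the full charge Q = 4π ε₀ r b_1 and the dipole moment D = 4π ε₀ r^3 b_2. -/
theorem stmt_14 (r : ℝ) (hr : 0 < r) (n : ℕ) (b c : ℕ → ℝ)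
    (hb0 : ∀ i, n + 1 < i → b i = 0)
    (hsys : ∀ i, 1 ≤ i → i ≤ n + 1 →
      (∑ j ∈ Finset.Icc 1 (n + 1), Fmat i j * r ^ (j - 1) * c j) = r ^ (i - 1) * b i) :
    (∫ z in (-r)..r, ∑ j ∈ Finset.Icc 1 (n + 1), c j * z ^ (j - 1)) = r * b 1 ∧
    (∫ z in (-r)..r, z * ∑ j ∈ Finset.Icc 1 (n + 1), c j * z ^ (j - 1)) = r ^ 3 * b 2 :=
  stmt_14_general r n b c hb0 hsys
end

section
/- (Theorem 2: dipole moments of higher orders of a conducting ball.) Under the stated hypotheses, for every natural number m, ∫_{-r}^{r} z^m ( Σ_{j=1}^{n+1} c_j z^{j-1} ) dz = (r^{m+1}/2) Σ_{i} (2i − 1) r^{i-1} F_{i, m+1} b_i, where the sum runs over integers i with δ ≤ i ≤ m + 1 and i ≡ m + 1 (mod 2), with δ = 1 if m is even and δ = 2 if m is odd, and where b_i := 0 for i > n + 1. Physically: the dipole moment of order m, D_m = 2πr ∫_{-r}^{r} z^m σ(z) dz, equals 2πε₀ r^{m+1} Σ_{i=δ,(2)}^{m+1} (2i − 1) r^{i-1}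 F_{i, m+1} b_i. -/
open Polynomial

/-!
Substituting `z = r x` turns the left-hand side into `r ^ (m + 1) ∫₋₁¹ x ^ m q(x) dx`, where
`q(x) = ∑ⱼ cⱼ r ^ (j - 1) x ^ (j - 1)` has degree at most `n`. Rodrigues' formula and repeated
integration by parts make the Legendre polynomials orthogonal on `[-1, 1]` with
`∫ P_l ^ 2 = 2 / (2l + 1)`, so `x ^ m = ∑_{l ≤ m} (2l + 1) / 2 · F_{l+1, m+1} P_l` and the integral
becomes a combination of the moments `∫ P_l q`. The linear system says these moments are
`r ^ l b_{l+1}` for `l ≤ n`; for `l > n` both sides vanish because `deg q < l`. Finally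
`F_{i, m+1} = 0` unless `i ≡ m + 1 (mod 2)`, since `P_{i-1}` has the parity of `i - 1`.
-/

open Finset intervalIntegral
open scoped Nat

theorem iterate_derivative_eq_C_of_natDegree_le {R : Type*} [Semiring R] {p : R[X]} {k : ℕ}
    (hp : p.natDegree ≤ k) : derivative^[k] p = C (k ! * p.coeff k) := by
  have hdeg : (derivative^[k] p).natDegree = 0 := by
    have := natDegree_iterate_derivative p k
    omega
  rw [eq_C_of_natDegree_eq_zero hdeg, coeff_iterate_derivative, zero_add,
    Nat.descFactorial_self, nsmul_eq_mul]

section CommRing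

variable {R : Type*} [CommRing R]

theorem monic_X_sq_sub_one : (X ^ 2 - 1 : R[X]).Monic := by
  simpa using monic_X_pow_sub_C (1 : R) two_ne_zero

theorem natDegree_X_sq_sub_one_pow [Nontrivial R] (k : ℕ) :
    ((X ^ 2 - 1 : R[X]) ^ k).natDegree = 2 * k := by
  rw [monic_X_sq_sub_one.natDegree_pow, show (X ^ 2 - 1 : R[X]) = X ^ 2 - C 1 by simp,
    natDegree_X_pow_sub_C, mul_comm]

theorem eval_eq_zero_of_X_sq_sub_one_dvd {p : R[X]} (hp : X ^ 2 - 1 ∣ p) {x : R}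
    (hx : x ^ 2 = 1) : p.eval x = 0 := by
  obtain ⟨g, rfl⟩ := hp
  simp [hx]

theorem iterate_derivative_comp_neg_X (p : R[X]) (k : ℕ) :
    derivative^[k] (p.comp (-X)) = (-1) ^ k * (derivative^[k] p).comp (-X) := by
  induction k generalizing p with
  | zero => simp
  | succ k ih => simp [ih (derivative p), derivative_comp, pow_succ]

end CommRing

noncomputable def unitIntegral : ℝ[X] →ₗ[ℝ] ℝ where
  toFun p := ∫ x in (-1 : ℝ)..1, p.eval x
  map_add' p q := by
    simpa using integral_add (p.continuous.intervalIntegrable _ _)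
      (q.continuous.intervalIntegrable _ _)
  map_smul' a p := by simp [integral_const_mul]

theorem unitIntegral_apply (p : ℝ[X]) :
    unitIntegral p = ∫ x in (-1 : ℝ)..1, p.eval x := rfl

theorem unitIntegral_derivative (p : ℝ[X]) :
    unitIntegral (derivative p) = p.eval 1 - p.eval (-1) :=
  integral_deriv_eq_sub' _ (funext fun x => (p.hasDerivAt x).deriv)
    (fun _ _ => p.differentiableAt) p.derivative.continuous.continuousOn

theorem unitIntegral_derivative_mul (p q : ℝ[X]) :
    unitIntegral (derivative p * q) =
      (p * q).eval 1 - (p * q).eval (-1) - unitIntegral (p * derivative q) := by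
  rw [← unitIntegral_derivative, derivative_mul, map_add]
  ring

theorem unitIntegral_iterate_derivative_mul {f : ℝ[X]} {k : ℕ} (hf : (X ^ 2 - 1) ^ k ∣ f)
    (q : ℝ[X]) :
    unitIntegral (derivative^[k] f * q) = (-1) ^ k * unitIntegral (f * derivative^[k] q) := by
  induction k generalizing q with
  | zero => simp
  | succ k ih =>
    have hdvd : X ^ 2 - 1 ∣ derivative^[k] f * q := by
      simpa using (pow_sub_dvd_iterate_derivative_of_pow_dvd k hf).mul_right q
    rw [Function.iterate_succ_apply', unitIntegral_derivative_mul,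
      eval_eq_zero_of_X_sq_sub_one_dvd hdvd (by norm_num),
      eval_eq_zero_of_X_sq_sub_one_dvd hdvd (by norm_num),
      ih ((pow_dvd_pow _ k.le_succ).trans hf), ← Function.iterate_succ_apply, pow_succ]
    ring

theorem unitIntegral_comp_neg_X (p : ℝ[X]) : unitIntegral (p.comp (-X)) = unitIntegral p := by
  simpa [unitIntegral_apply] using integral_comp_neg (a := -1) (b := 1) (fun x => p.eval x)

theorem unitIntegral_eq_zero_of_comp_neg_X {p : ℝ[X]} (hp : p.comp (-X) = -p) :
    unitIntegral p = 0 := by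
  have := unitIntegral_comp_neg_X p
  rw [hp, map_neg] at this
  linarith

theorem unitIntegral_X_sq_sub_one_pow_succ (k : ℕ) :
    (2 * k + 3) * unitIntegral ((X ^ 2 - 1) ^ (k + 1)) =
      -(2 * k + 2) * unitIntegral ((X ^ 2 - 1) ^ k) := by
  have hderiv : derivative (X * (X ^ 2 - 1) ^ (k + 1) : ℝ[X]) =
      C (2 * (k : ℝ) + 3) * (X ^ 2 - 1) ^ (k + 1) + C (2 * (k : ℝ) + 2) * (X ^ 2 - 1) ^ k := by
    simp only [derivative_mul, derivative_X, derivative_pow, derivative_sub,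
      derivative_one, map_add, map_mul, map_natCast, map_ofNat]
    push_cast
    ring
  have := unitIntegral_derivative (X * (X ^ 2 - 1) ^ (k + 1))
  rw [hderiv, map_add, ← smul_eq_C_mul, ← smul_eq_C_mul, map_smul, map_smul] at this
  norm_num at this
  linarith

theorem unitIntegral_X_sq_sub_one_pow (k : ℕ) :
    unitIntegral ((X ^ 2 - 1) ^ k) = (-1) ^ k * 2 ^ (2 * k + 1) * k ! ^ 2 / (2 * k + 1)! := by
  induction k with
  | zero => norm_num [unitIntegral_apply]
  | succ k ih =>
    have hrec := unitIntegral_X_sq_sub_one_pow_succ k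
    rw [ih] at hrec
    have hfact : ((2 * (k + 1) + 1)! : ℝ) = (2 * k + 3) * (2 * k + 2) * (2 * k + 1)! := by
      rw [show 2 * (k + 1) + 1 = 2 * k + 1 + 1 + 1 by ring, Nat.factorial_succ,
        Nat.factorial_succ]
      push_cast
      ring
    field_simp at hrec
    rw [hfact, Nat.factorial_succ, eq_div_iff (by positivity)]
    push_cast
    linear_combination (2 * (k : ℝ) + 2) * hrec

theorem unitIntegral_legendre_mul (k : ℕ) (q : ℝ[X]) :
    unitIntegral (legendre k * q) =
      (-1) ^ k / (2 ^ k * k !) * unitIntegral ((X ^ 2 - 1) ^ k * derivative^[k] q) := by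
  rw [legendre, smul_mul_assoc, map_smul, unitIntegral_iterate_derivative_mul dvd_rfl,
    smul_eq_mul]
  ring

theorem unitIntegral_legendre_mul_of_natDegree_lt {k : ℕ} {q : ℝ[X]} (hq : q.natDegree < k) :
    unitIntegral (legendre k * q) = 0 := by
  rw [unitIntegral_legendre_mul, iterate_derivative_eq_zero hq, mul_zero, map_zero, mul_zero]

theorem unitIntegral_legendre_mul_of_natDegree_le {k : ℕ} {q : ℝ[X]} (hq : q.natDegree ≤ k) :
    unitIntegral (legendre k * q) = q.coeff k * (2 ^ (k + 1) * k ! ^ 2 / (2 * k + 1)!) := by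
  rw [unitIntegral_legendre_mul, iterate_derivative_eq_C_of_natDegree_le hq, mul_comm _ (C _),
    ← smul_eq_C_mul, map_smul, unitIntegral_X_sq_sub_one_pow, smul_eq_mul]
  have : (k ! : ℝ) ≠ 0 := by positivity
  field_simp
  rw [← pow_mul, mul_comm k 2, pow_mul, neg_one_sq, one_pow]
  ring

theorem natDegree_legendre_le (k : ℕ) : (legendre k).natDegree ≤ k := by
  refine (natDegree_smul_le _ _).trans ?_
  have := natDegree_iterate_derivative ((X ^ 2 - 1 : ℝ[X]) ^ k) k
  rw [natDegree_X_sq_sub_one_pow] at this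
  omega

theorem coeff_legendre_self (k : ℕ) : (legendre k).coeff k = (2 * k).choose k / 2 ^ k := by
  have hlead : ((X ^ 2 - 1 : ℝ[X]) ^ k).coeff (2 * k) = 1 := by
    have := ((monic_X_sq_sub_one (R := ℝ)).pow k).coeff_natDegree
    rwa [natDegree_X_sq_sub_one_pow] at this
  rw [legendre, coeff_smul, coeff_iterate_derivative, ← two_mul, hlead,
    Nat.descFactorial_eq_factorial_mul_choose, smul_eq_mul, nsmul_eq_mul]
  have : (k ! : ℝ) ≠ 0 := by positivity
  push_cast
  field_simp

theorem coeff_legendre_self_ne_zero (k : ℕ) : (legendre k).coeff k ≠ 0 := by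
  rw [coeff_legendre_self]
  have := Nat.choose_pos (show k ≤ 2 * k by omega)
  positivity

theorem natDegree_legendre (k : ℕ) : (legendre k).natDegree = k :=
  natDegree_eq_of_le_of_coeff_ne_zero (natDegree_legendre_le k) (coeff_legendre_self_ne_zero k)

theorem degree_legendre (k : ℕ) : (legendre k).degree = k :=
  degree_eq_of_le_of_coeff_ne_zero (degree_le_of_natDegree_le (natDegree_legendre_le k))
    (coeff_legendre_self_ne_zero k)

theorem unitIntegral_legendre_mul_legendre (k l : ℕ) :
    unitIntegral (legendre k * legendre l) = if k = l then (2 : ℝ) / (2 * k + 1) else 0 := by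
  rcases lt_trichotomy k l with hkl | rfl | hlk
  · rw [mul_comm, unitIntegral_legendre_mul_of_natDegree_lt (by rwa [natDegree_legendre]),
      if_neg hkl.ne]
  · rw [unitIntegral_legendre_mul_of_natDegree_le (natDegree_legendre k).le, coeff_legendre_self,
      if_pos rfl]
    have hchoose := Nat.choose_mul_factorial_mul_factorial (show k ≤ 2 * k by omega)
    rw [show 2 * k - k = k by omega] at hchoose
    rw [Nat.factorial_succ, ← hchoose]
    have : (k ! : ℝ) ≠ 0 := by positivity
    have := Nat.choose_pos (show k ≤ 2 * k by omega)
    push_cast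
    field_simp
    ring
  · rw [unitIntegral_legendre_mul_of_natDegree_lt (by rwa [natDegree_legendre]),
      if_neg hlk.ne']

noncomputable def legendreSequence : Sequence ℝ := ⟨legendre, degree_legendre⟩

theorem eq_sum_legendre {p : ℝ[X]} {m : ℕ} (hp : p.natDegree ≤ m) :
    p = ∑ l ∈ range (m + 1), ((2 * l + 1) / 2 * unitIntegral (legendre l * p)) • legendre l := by
  have hmem : p ∈ degreeLT ℝ (m + 1) := mem_degreeLT.mpr <|
    (degree_le_of_natDegree_le hp).trans_lt (WithBot.coe_lt_coe.mpr m.lt_succ_self)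
  rw [← Sequence.span_degreeLT legendreSequence
      (fun i _ => isUnit_iff_ne_zero.mpr (leadingCoeff_ne_zero.mpr (legendreSequence.ne_zero i))),
    show Set.Iio (m + 1) = range (m + 1) by simp,
    Submodule.mem_span_image_finset_iff_exists_fun'] at hmem
  obtain ⟨c, rfl⟩ := hmem
  refine sum_congr rfl fun l hl => ?_
  have hcoe : ⇑legendreSequence = legendre := rfl
  simp only [hcoe, mul_sum, mul_smul_comm, map_sum, map_smul, smul_eq_mul,
    unitIntegral_legendre_mul_legendre, mul_ite, mul_zero, sum_ite_eq, if_pos hl]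
  field_simp

theorem unitIntegral_mul_eq_sum_legendre {p : ℝ[X]} {m : ℕ} (hp : p.natDegree ≤ m) (q : ℝ[X]) :
    unitIntegral (p * q) = ∑ l ∈ range (m + 1),
      (2 * l + 1) / 2 * unitIntegral (legendre l * p) * unitIntegral (legendre l * q) := by
  conv_lhs => rw [eq_sum_legendre hp]
  simp only [sum_mul, smul_mul_assoc, map_sum, map_smul, smul_eq_mul]

theorem legendre_comp_neg_X (k : ℕ) : (legendre k).comp (-X) = (-1) ^ k * legendre k := by
  have hW : ((X ^ 2 - 1 : ℝ[X]) ^ k).comp (-X) = (X ^ 2 - 1) ^ k := by simp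
  have h := iterate_derivative_comp_neg_X ((X ^ 2 - 1 : ℝ[X]) ^ k) k
  rw [hW] at h
  have hsq : ((-1 : ℝ[X]) ^ k) * (-1) ^ k = 1 := by rw [← mul_pow]; simp
  rw [legendre, smul_comp, mul_smul_comm]
  congr 1
  calc _ = (-1) ^ k * ((-1) ^ k * (derivative^[k] ((X ^ 2 - 1 : ℝ[X]) ^ k)).comp (-X)) := by
        rw [← mul_assoc, hsq, one_mul]
    _ = _ := by rw [← h]

theorem unitIntegral_legendre_mul_X_pow_of_odd {k d : ℕ} (h : Odd (k + d)) :
    unitIntegral (legendre k * X ^ d) = 0 := by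
  apply unitIntegral_eq_zero_of_comp_neg_X
  rw [mul_comp, legendre_comp_neg_X, X_pow_comp, neg_pow (X : ℝ[X]), mul_mul_mul_comm, ← pow_add,
    h.neg_one_pow]
  ring

theorem Fmat_eq_unitIntegral (i j : ℕ) :
    Fmat i j = unitIntegral (legendre (i - 1) * X ^ (j - 1)) := by
  simp [Fmat, unitIntegral_apply]

theorem Fmat_eq_zero_of_odd {i j : ℕ} (hi : 1 ≤ i) (hj : 1 ≤ j) (h : Odd (i + j)) :
    Fmat i j = 0 := by
  rw [Fmat_eq_unitIntegral, unitIntegral_legendre_mul_X_pow_of_odd]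
  rw [Nat.odd_iff] at h ⊢
  omega

theorem integral_neg_self_eq_mul_integral_comp_mul (r : ℝ) (f : ℝ → ℝ) :
    ∫ z in -r..r, f z = r * ∫ x in (-1 : ℝ)..1, f (r * x) := by
  simp

theorem sum_Icc_one_eq_sum_range {M : Type*} [AddCommMonoid M] (g : ℕ → M) (m : ℕ) :
    ∑ i ∈ Icc 1 (m + 1), g i = ∑ l ∈ range (m + 1), g (l + 1) := by
  rw [range_eq_Ico, sum_Ico_add', zero_add, Ico_add_one_right_eq_Icc]

/-- The density `σ(r η)` up to the factor `2ε₀ / r`, as a polynomial in `η = z / r`. -/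
noncomputable def rescaledDensity (r : ℝ) (n : ℕ) (c : ℕ → ℝ) : ℝ[X] :=
  ∑ j ∈ Icc 1 (n + 1), C (c j * r ^ (j - 1)) * X ^ (j - 1)

theorem natDegree_rescaledDensity_le (r : ℝ) (n : ℕ) (c : ℕ → ℝ) :
    (rescaledDensity r n c).natDegree ≤ n :=
  natDegree_sum_le_of_forall_le _ _ fun j hj =>
    (natDegree_C_mul_X_pow_le _ _).trans (by simp only [mem_Icc] at hj; omega)

theorem unitIntegral_legendre_mul_rescaledDensity (r : ℝ) (n : ℕ) (c : ℕ → ℝ) (i : ℕ) :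
    unitIntegral (legendre (i - 1) * rescaledDensity r n c) =
      ∑ j ∈ Icc 1 (n + 1), Fmat i j * r ^ (j - 1) * c j := by
  simp only [rescaledDensity, mul_sum, map_sum, Fmat_eq_unitIntegral, ← smul_eq_C_mul,
    mul_smul_comm, map_smul, smul_eq_mul]
  exact sum_congr rfl fun j _ => by ring

theorem integral_pow_mul_density (r : ℝ) (n : ℕ) (c : ℕ → ℝ) (m : ℕ) :
    ∫ z in -r..r, z ^ m * ∑ j ∈ Icc 1 (n + 1), c j * z ^ (j - 1) =
      r ^ (m + 1) * unitIntegral (X ^ m * rescaledDensity r n c) := by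
  simp only [integral_neg_self_eq_mul_integral_comp_mul r, unitIntegral_apply, rescaledDensity,
    eval_mul, eval_pow, eval_X, eval_finsetSum, eval_C, mul_sum, ← integral_const_mul]
  exact integral_congr fun x _ => sum_congr rfl fun j _ => by ring

theorem stmt_15_general (r : ℝ) (n : ℕ) (b c : ℕ → ℝ)
    (hb0 : ∀ i, n + 1 < i → b i = 0)
    (hsys : ∀ i, 1 ≤ i → i ≤ n + 1 →
      (∑ j ∈ Finset.Icc 1 (n + 1), Fmat i j * r ^ (j - 1) * c j) = r ^ (i - 1) * b i)
    (m : ℕ) :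
    (∫ z in (-r)..r, z ^ m * ∑ j ∈ Finset.Icc 1 (n + 1), c j * z ^ (j - 1)) =
      (r ^ (m + 1) / 2) *
        ∑ i ∈ (Finset.Icc 1 (m + 1)).filter (fun i => i % 2 = (m + 1) % 2),
          (2 * (i : ℝ) - 1) * r ^ (i - 1) * Fmat i (m + 1) * b i := by
  have hmoment (l : ℕ) : unitIntegral (legendre l * rescaledDensity r n c) = r ^ l * b (l + 1) := by
    rcases le_or_gt (l + 1) (n + 1) with hln | hnl
    · simpa using (unitIntegral_legendre_mul_rescaledDensity r n c (l + 1)).trans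
        (hsys (l + 1) l.succ_pos hln)
    · rw [unitIntegral_legendre_mul_of_natDegree_lt
        ((natDegree_rescaledDensity_le r n c).trans_lt (by omega)), hb0 (l + 1) hnl, mul_zero]
  have hparity : ∀ i ∈ Icc 1 (m + 1),
      (2 * (i : ℝ) - 1) * r ^ (i - 1) * Fmat i (m + 1) * b i ≠ 0 → i % 2 = (m + 1) % 2 := by
    intro i hi hne
    by_contra hpar
    refine hne ?_
    rw [Fmat_eq_zero_of_odd (mem_Icc.mp hi).1 m.succ_pos (by rw [Nat.odd_iff]; omega),
      mul_zero, zero_mul]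
  rw [integral_pow_mul_density, unitIntegral_mul_eq_sum_legendre (natDegree_X_pow_le m),
    sum_filter_of_ne hparity, sum_Icc_one_eq_sum_range, mul_sum, mul_sum]
  refine sum_congr rfl fun l _ => ?_
  rw [hmoment l, Fmat_eq_unitIntegral]
  simp only [add_tsub_cancel_right]
  push_cast
  ring

/-- Theorem 2 (dipole moments of higher orders of a conducting ball).
Under the same hypotheses (with b_i := 0 for i > n+1), for every natural m,
∫_{-r}^{r} z^m Σ_j c_j z^{j-1} dz
  = (r^{m+1}/2) Σ_{i=δ,(2)}^{m+1} (2i-1) r^{i-1} F_{i,m+1} b_i,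
where the sum runs over 1 ≤ i ≤ m+1 with i ≡ m+1 (mod 2)
(δ = 1 for even m, δ = 2 for odd m). -/
theorem stmt_15 (r : ℝ) (hr : 0 < r) (n : ℕ) (b c : ℕ → ℝ)
    (hb0 : ∀ i, n + 1 < i → b i = 0)
    (hsys : ∀ i, 1 ≤ i → i ≤ n + 1 →
      (∑ j ∈ Finset.Icc 1 (n + 1), Fmat i j * r ^ (j - 1) * c j) = r ^ (i - 1) * b i)
    (m : ℕ) :
    (∫ z in (-r)..r, z ^ m * ∑ j ∈ Finset.Icc 1 (n + 1), c j * z ^ (j - 1)) =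
      (r ^ (m + 1) / 2) *
        ∑ i ∈ (Finset.Icc 1 (m + 1)).filter (fun i => i % 2 = (m + 1) % 2),
          (2 * (i : ℝ) - 1) * r ^ (i - 1) * Fmat i (m + 1) * b i :=
  stmt_15_general r n b c hb0 hsys m
end

section
/- For every integer n ≥ 2, the entries of the matrix of moments of the Legendre polynomials satisfy the identity (2n − 1) F_{n, n+2} − (n − 1) F_{n-1, n+1} = n F_{n+1, n+1}. -/
open Polynomial

/-- Iterated Leibniz rule for multiplication by `X`. -/
lemma iter_deriv_X_mul (m : ℕ) (p : ℝ[X]) :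
    derivative^[m+1] (X * p) =
      X * derivative^[m+1] p + ((m : ℝ[X]) + 1) * derivative^[m] p := by
  induction m generalizing p with
  | zero => simp [derivative_mul]; ring
  | succ k ih =>
    rw [Function.iterate_succ_apply' derivative (k+1) (X * p), ih, derivative_add,
      derivative_mul, derivative_mul, derivative_X,
      Function.iterate_succ_apply' derivative (k+1) p,
      Function.iterate_succ_apply' derivative k p]
    simp only [derivative_add, derivative_natCast, derivative_one]
    push_cast
    ring

/-- The recursion for `Q n = D^n[(x²-1)^n]` equivalent to Bonnet's recursion. -/
lemma Qrec (m : ℕ) :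
    derivative^[m+2] (((X:ℝ[X])^2-1)^(m+2)) =
      (4*(m:ℝ[X])+6) * (X * derivative^[m+1] (((X:ℝ[X])^2-1)^(m+1)))
        - 4*((m:ℝ[X])+1)^2 * derivative^[m] (((X:ℝ[X])^2-1)^m) := by
  set u : ℝ[X] := (X:ℝ[X])^2 - 1 with hu
  set Qm : ℝ[X] := derivative^[m] (u^m) with hQm
  set Qm1 : ℝ[X] := derivative^[m+1] (u^(m+1)) with hQm1
  set R : ℝ[X] := derivative^[m] (u^(m+1)) with hRdef
  have hdu : derivative u = 2 * X := by
    rw [hu]; simp only [derivative_sub, derivative_one, derivative_X_pow, map_ofNat,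
      C_eq_natCast, sub_zero, pow_one, Nat.cast_ofNat]
    norm_num
  have hA : derivative (u^(m+2)) = C (2*(m:ℝ)+4) * (X * u^(m+1)) := by
    rw [show m + 2 = (m+1) + 1 from rfl, derivative_pow_succ, hdu]
    simp only [map_add, map_mul, map_ofNat, C_eq_natCast, map_one]
    push_cast
    ring
  have hQ2 : derivative^[m+2] (u^(m+2)) =
      (2*(m:ℝ[X])+4) * derivative^[m+1] (X * u^(m+1)) := by
    rw [Function.iterate_succ_apply derivative (m+1) (u^(m+2)), hA,
      iterate_derivative_C_mul]
    simp only [map_add, map_mul, map_ofNat, C_eq_natCast, map_one]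
  have hB : derivative^[m+1] (X * u^(m+1)) =
      X * Qm1 + ((m:ℝ[X])+1) * R := iter_deriv_X_mul m (u^(m+1))
  have hder : derivative (X * u^(m+1)) =
      C (2*(m:ℝ)+3) * u^(m+1) + C (2*(m:ℝ)+2) * u^m := by
    rw [derivative_mul, derivative_pow_succ, derivative_X, hdu]
    have hX2 : (X:ℝ[X])^2 * u^m = u^(m+1) + u^m := by rw [hu]; ring
    simp only [map_add, map_mul, map_ofNat, C_eq_natCast, map_one]
    linear_combination ((m:ℝ[X]) + 1) * 2 * hX2
  have hC : derivative^[m+1] (X * u^(m+1)) =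
      (2*(m:ℝ[X])+3) * R + (2*(m:ℝ[X])+2) * Qm := by
    rw [Function.iterate_succ_apply derivative m (X * u^(m+1)), hder,
      iterate_map_add _ _, iterate_derivative_C_mul, iterate_derivative_C_mul,
      ← hQm, ← hRdef]
    simp only [map_add, map_mul, map_ofNat, C_eq_natCast, map_one]
  have eq1 : X * Qm1 + ((m:ℝ[X])+1) * R = (2*(m:ℝ[X])+3) * R + (2*(m:ℝ[X])+2) * Qm :=
    hB ▸ hC
  rw [hQ2, hB]
  linear_combination (-(2*((m:ℝ[X])+1))) * eq1

/-- Bonnet's recursion, evaluated at a point and multiplied by `η ^ (m+2)`. -/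
lemma bonnet_eval (m : ℕ) (η : ℝ) :
    (2*(m:ℝ)+3) * ((legendre (m+1)).eval η * η^(m+3)) -
      ((m:ℝ)+1) * ((legendre m).eval η * η^(m+2)) =
    ((m:ℝ)+2) * ((legendre (m+2)).eval η * η^(m+2)) := by
  have hq := congrArg (Polynomial.eval η) (Qrec m)
  simp only [eval_sub, eval_mul, eval_add, eval_pow, eval_X, eval_natCast,
    eval_ofNat, eval_one] at hq
  simp only [legendre, eval_smul, smul_eq_mul]
  rw [hq]
  have hF : ((m.factorial : ℝ)) ≠ 0 := by positivity
  have hF1 : (((m+1).factorial : ℝ)) ≠ 0 := by positivity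
  have hF2 : (((m+2).factorial : ℝ)) ≠ 0 := by positivity
  have h2 : (2:ℝ)^m ≠ 0 := by positivity
  rw [show m+2 = (m+1)+1 from rfl, Nat.factorial_succ (m+1), Nat.factorial_succ m]
  push_cast
  field_simp
  ring

/-- For n ≥ 2, (2n-1) F_{n,n+2} - (n-1) F_{n-1,n+1} = n F_{n+1,n+1}. -/
theorem stmt_17 (n : ℕ) (hn : 2 ≤ n) :
    (2 * (n : ℝ) - 1) * Fmat n (n + 2) - ((n : ℝ) - 1) * Fmat (n - 1) (n + 1) =
      (n : ℝ) * Fmat (n + 1) (n + 1) := by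
  obtain ⟨m, rfl⟩ : ∃ m, n = m + 2 := ⟨n - 2, by omega⟩
  have hint : ∀ (k j : ℕ), IntervalIntegrable
      (fun η : ℝ => (legendre k).eval η * η ^ j) MeasureTheory.volume (-1) 1 :=
    fun k j => ((Polynomial.continuous _).mul (continuous_pow _)).intervalIntegrable _ _
  have e1 : m + 2 - 1 = m + 1 := rfl
  have e2 : m + 2 + 2 - 1 = m + 3 := rfl
  have e3 : m + 2 - 1 - 1 = m := rfl
  have e4 : m + 2 + 1 - 1 = m + 2 := rfl
  simp only [Fmat, e1, e2, e3, e4]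
  push_cast
  rw [show (2 * ((m:ℝ) + 2) - 1) = 2*(m:ℝ)+3 by ring,
    show ((m:ℝ) + 2 - 1) = (m:ℝ)+1 by ring,
    ← intervalIntegral.integral_const_mul, ← intervalIntegral.integral_const_mul,
    ← intervalIntegral.integral_const_mul,
    ← intervalIntegral.integral_sub ((hint _ _).const_mul _) ((hint _ _).const_mul _)]
  exact intervalIntegral.integral_congr fun η _ => bonnet_eval m η
end
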